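/- Let n ≥ 2. For every permutation p of {1,…,n}, the entry p_{n−1} is not a leaf of the minmax tree T^m_p. -/

import Mathlib

/-- Binary trees with natural-number labels, used to model minmax trees of
permutations. -/
inductive BTree where
  | nil : BTree
  | node : ℕ → BTree → BTree → BTree
deriving DecidableEq, Repr

namespace BTree

/-- The label of the root (if any). -/
def rootVal : BTree → Option ℕ
  | .nil => none
  | .node v _ _ => some v

/-- Whether the value `x` occurs as a label in the tree. -/
def memB : BTree → ℕ → Bool
  | .nil, _ => false
  | .node v l r, x => (x == v) || memB l x || memB r x

/-- The number of children of the (unique, for permutations) node labelled `x`. -/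
def numChildren : BTree → ℕ → ℕ
  | .nil, _ => 0
  | .node v l r, x =>
      if x = v then (if l = .nil then 0 else 1) + (if r = .nil then 0 else 1)
      else numChildren l x + numChildren r x

/-- `x` is a leaf of the tree: it occurs in the tree and has no children. -/
def IsLeaf (t : BTree) (x : ℕ) : Prop := t.memB x = true ∧ t.numChildren x = 0

instance (t : BTree) (x : ℕ) : Decidable (t.IsLeaf x) := by unfold IsLeaf; infer_instance

/-- `childB t x y = true` iff `x` is a child of `y` in `t`, i.e. `x` is the root of
the left or the right subtree hanging from `y`. -/
def childB : BTree → ℕ → ℕ → Bool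
  | .nil, _, _ => false
  | .node v l r, x, y =>
      ((y == v) && (l.rootVal == some x || r.rootVal == some x))
      || childB l x y || childB r x y

/-- `ancB t x y = true` iff `x` is a (strict) ancestor of `y` in `t`, i.e. `y` lies
in a subtree hanging from `x`. -/
def ancB : BTree → ℕ → ℕ → Bool
  | .nil, _, _ => false
  | .node v l r, x, y =>
      ((x == v) && (memB l y || memB r y)) || ancB l x y || ancB r x y

end BTree

/-- `x` is the leftmost-eligible extreme letter of `l`: the minimum or the maximum. -/
def isExtreme (l : List ℕ) (x : ℕ) : Bool :=
  (l.min? == some x) || (l.max? == some x)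

/-- Fuelled construction of the minmax tree of a list of distinct naturals:
split the list as `u ++ [m] ++ v` where `m` is the leftmost of the minimum and
maximum letters, put `m` at the root and recurse on `u` (left) and `v` (right). -/
def mmAux : ℕ → List ℕ → BTree
  | 0, _ => .nil
  | fuel+1, l =>
    if l.isEmpty then .nil
    else
      let k := l.findIdx (isExtreme l)
      .node (l.getD k 0) (mmAux fuel (l.take k)) (mmAux fuel (l.drop (k+1)))

/-- The minmax tree `T^m_p` of a word `l` (with distinct letters). -/
def minmaxTree (l : List ℕ) : BTree := mmAux l.length l

/-- The word `p_1 p_2 … p_n` on the letters `{1,…,n}` associated to a permutation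
`p` of `Fin n`. -/
def permList (n : ℕ) (p : Equiv.Perm (Fin n)) : List ℕ :=
  List.ofFn (fun i => (p i : ℕ) + 1)

/-- The `i`-th entry `p_i` (1-indexed) of the permutation `p`. -/
def entryAt (n : ℕ) (p : Equiv.Perm (Fin n)) (i : ℕ) : ℕ :=
  (permList n p).getD (i - 1) 0

/-!
The root of a minmax tree is the first letter that is a minimum or a maximum of the word, and
such a letter always occurs before the last position: if both extremes occurred only there, the
word would be constant. Hence the right subtree of the root is nonempty, so the penultimate
letter either is the root, and has a right child, or is the penultimate letter of the right
subword, and we conclude by induction.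
-/

theorem List.findIdx_lt_length_sub_one {α : Type*} {p : α → Bool} {l : List α}
    (h : ∃ x ∈ l.dropLast, p x) : l.findIdx p < l.length - 1 := by
  have hne : l ≠ [] := by rintro rfl; simp at h
  have hd := List.findIdx_lt_length_of_exists h
  rw [← List.dropLast_append_getLast hne, List.findIdx_append, if_pos hd]
  simpa using hd

theorem exists_isExtreme_mem_dropLast {l : List ℕ} (hl : 2 ≤ l.length) :
    ∃ x ∈ l.dropLast, isExtreme l x := by
  have hne : l ≠ [] := List.ne_nil_of_length_pos (by omega)
  obtain ⟨m, hm⟩ := Option.ne_none_iff_exists'.mp (mt List.min?_eq_none_iff.mp hne)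
  obtain ⟨M, hM⟩ := Option.ne_none_iff_exists'.mp (mt List.max?_eq_none_iff.mp hne)
  obtain ⟨hm_mem, hm_le⟩ := List.min?_eq_some_iff.mp hm
  obtain ⟨hM_mem, hM_ge⟩ := List.max?_eq_some_iff.mp hM
  have hsplit := List.dropLast_append_getLast hne
  have mem_split : ∀ x ∈ l, x ∈ l.dropLast ∨ x = l.getLast hne := fun x hx => by
    rw [← hsplit] at hx; simpa using hx
  rcases mem_split m hm_mem with hmd | hm_last
  · exact ⟨m, hmd, by simp [isExtreme, hm]⟩
  rcases mem_split M hM_mem with hMd | hM_last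
  · exact ⟨M, hMd, by simp [isExtreme, hM]⟩
  obtain ⟨x, hx⟩ := List.exists_mem_of_ne_nil l.dropLast
    (List.ne_nil_of_length_pos (by simp only [List.length_dropLast]; omega))
  have hxm : x = m := le_antisymm (hm_last ▸ hM_last ▸ hM_ge x (List.mem_of_mem_dropLast hx))
    (hm_le x (List.mem_of_mem_dropLast hx))
  exact ⟨x, hx, by simp [isExtreme, hm, hxm]⟩

theorem findIdx_isExtreme_lt_length_sub_one {l : List ℕ} (hl : 2 ≤ l.length) :
    l.findIdx (isExtreme l) < l.length - 1 :=
  List.findIdx_lt_length_sub_one (exists_isExtreme_mem_dropLast hl)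

theorem mmAux_succ_of_ne_nil (fuel : ℕ) {l : List ℕ} (hl : l ≠ []) :
    mmAux (fuel + 1) l =
      .node (l.getD (l.findIdx (isExtreme l)) 0) (mmAux fuel (l.take (l.findIdx (isExtreme l))))
        (mmAux fuel (l.drop (l.findIdx (isExtreme l) + 1))) := by
  simp [mmAux, hl]

theorem mmAux_ne_nil {fuel : ℕ} {l : List ℕ} (hfuel : fuel ≠ 0) (hl : l ≠ []) :
    mmAux fuel l ≠ .nil := by
  obtain ⟨f, rfl⟩ := Nat.exists_eq_succ_of_ne_zero hfuel
  simp [mmAux_succ_of_ne_nil f hl]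

theorem List.getD_drop {α : Type*} (l : List α) (d : α) (i j : ℕ) :
    (l.drop i).getD j d = l.getD (i + j) d := by
  simp [List.getD_eq_getElem?_getD]

theorem numChildren_mmAux_penultimate_ne_zero (fuel : ℕ) {l : List ℕ} (hl : 2 ≤ l.length)
    (hfuel : l.length ≤ fuel) : (mmAux fuel l).numChildren (l.getD (l.length - 2) 0) ≠ 0 := by
  induction fuel generalizing l with
  | zero => omega
  | succ f ih =>
    rw [mmAux_succ_of_ne_nil f (List.ne_nil_of_length_pos (by omega))]
    set k := l.findIdx (isExtreme l)
    have hk : k < l.length - 1 := findIdx_isExtreme_lt_length_sub_one hl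
    set r := l.drop (k + 1)
    have hr : mmAux f r ≠ .nil := mmAux_ne_nil (by omega)
      (by simp only [r, ne_eq, List.drop_eq_nil_iff, not_le]; omega)
    by_cases hroot : l.getD (l.length - 2) 0 = l.getD k 0
    · simp only [BTree.numChildren, if_pos hroot, if_neg hr]
      omega
    · have hk2 : k < l.length - 2 := by
        by_contra hk2
        exact hroot (by congr 1; omega)
      have hpen : r.getD (r.length - 2) 0 = l.getD (l.length - 2) 0 := by
        simp only [r, List.getD_drop, List.length_drop]; congr 1; omega
      have hright := ih (l := r) (by simp only [r, List.length_drop]; omega)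
        (by simp only [r, List.length_drop]; omega)
      rw [hpen] at hright
      simp only [BTree.numChildren, if_neg hroot]
      omega

/-- For `n ≥ 2`, in every permutation `p` of `{1,…,n}` the entry
`p_{n-1}` is not a leaf of the minmax tree. -/
theorem penultimate_entry_not_leaf (n : ℕ) (hn : 2 ≤ n) (p : Equiv.Perm (Fin n)) :
    ¬ (minmaxTree (permList n p)).IsLeaf (entryAt n p (n - 1)) := by
  have hlen : (permList n p).length = n := List.length_ofFn
  have h := numChildren_mmAux_penultimate_ne_zero n (hn.trans hlen.ge) hlen.le
  rw [hlen] at h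
  rw [minmaxTree, hlen, entryAt, Nat.sub_sub]
  exact fun hleaf => h hleaf.2
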